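/- Let G be a finite group, C_1,…,C_r conjugacy classes ordered so that equal classes are consecutive with associated partition P and B_P := π^{−1}(S_P), fix 1 < k < r, and set L_k := ⟨Q_1,…,Q_{k−1}⟩ ∩ B_P and R_k := ⟨Q_{k+1},…,Q_{r−1}⟩ ∩ B_P. For every node N (an orbit of L_k × R_k × G on T^o(C_1,…,C_r)), the set of heads {(g_1,…,g_k, (g_1⋯g_k)^{−1}) : (g_1,…,g_r) ∈ N} is a single orbit of L_k × G on G^{k+1}, and the set of tails {(g_1⋯g_k, g_{k+1},…,g_r) : (g_1,…,g_r) ∈ N} is a single orbit of R_k × G on G^{r−k+1}. -/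
import Mathlib


/-- The braid move `Q_i` (`0`-indexed): it replaces the entries in positions `i` and `i+1`
of a tuple `(g_0, …, g_{r-1})` by `g_{i+1}` and `g_{i+1}⁻¹ * g_i * g_{i+1}` respectively,
leaving all other entries unchanged.  (For `i + 1 ≥ r` it is the identity.) -/
def braidMove {G : Type*} [Group G] {r : ℕ} (i : ℕ) (g : Fin r → G) : Fin r → G :=
  fun m =>
    if _hm : (m : ℕ) = i then
      if h : i + 1 < r then g ⟨i + 1, h⟩ else g m
    else if hm' : (m : ℕ) = i + 1 then
      (g m)⁻¹ * g ⟨i, by have := m.isLt; omega⟩ * g m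
    else g m

/-- The braid relations on `n` generators `Q_0, …, Q_{n-1}`. -/
def braidRels (n : ℕ) : Set (FreeGroup (Fin n)) :=
  {w | (∃ i j : Fin n, (i : ℕ) + 1 = (j : ℕ) ∧
          w = FreeGroup.of i * FreeGroup.of j * FreeGroup.of i *
              (FreeGroup.of j * FreeGroup.of i * FreeGroup.of j)⁻¹) ∨
       (∃ i j : Fin n, (i : ℕ) + 2 ≤ (j : ℕ) ∧
          w = FreeGroup.of i * FreeGroup.of j * (FreeGroup.of j * FreeGroup.of i)⁻¹)}

/-- The Artin braid group on `r` strings, presented by `r - 1` generators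
subject to the braid relations. -/
abbrev BraidGroup (r : ℕ) : Type := PresentedGroup (braidRels (r - 1))

/-- Diagonal conjugation of a tuple by a group element `h`. -/
def diagConj {G : Type*} [Group G] {n : ℕ} (h : G) (g : Fin n → G) : Fin n → G :=
  fun m => h⁻¹ * g m * h

/-- The set `T^o(C_1, …, C_r)` of generating product-one tuples with `τ_i ∈ C_i`
for every `i`. -/
def nielsenTuples {G : Type*} [Group G] {r : ℕ} (C : Fin r → Set G) : Set (Fin r → G) :=
  {τ | (∀ m, τ m ∈ C m) ∧ (List.ofFn τ).prod = 1 ∧ Subgroup.closure (Set.range τ) = ⊤}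
/-- Membership in the parabolic subgroup `B_P`: a braid `b` lies in `B_P` iff the underlying
permutation `π b` preserves the class vector `C`. -/
def inBP {G : Type*} [Group G] {r : ℕ} (C : Fin r → Set G)
    (π : BraidGroup r →* Equiv.Perm (Fin r)) (b : BraidGroup r) : Prop :=
  ∀ m : Fin r, C (π b m) = C m

/-- Generators of `L_k`: the braid generators `Q_m` with `m + 1 < k` (0-indexed),
touching only the first `k` strings. -/
def LkGens (r k : ℕ) : Set (BraidGroup r) :=
  {x | ∃ m : Fin (r - 1), (m : ℕ) + 1 < k ∧ x = PresentedGroup.of m}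

/-- Generators of `R_k`: the braid generators `Q_m` with `k ≤ m` (0-indexed),
touching only the last `r - k` strings. -/
def RkGens (r k : ℕ) : Set (BraidGroup r) :=
  {x | ∃ m : Fin (r - 1), k ≤ (m : ℕ) ∧ x = PresentedGroup.of m}

/-- Membership in `L_k := ⟨Q_m : m + 1 < k⟩ ⊓ B_P`. -/
def inLk {G : Type*} [Group G] {r : ℕ} (C : Fin r → Set G)
    (π : BraidGroup r →* Equiv.Perm (Fin r)) (k : ℕ) (b : BraidGroup r) : Prop :=
  b ∈ Subgroup.closure (LkGens r k) ∧ inBP C π b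

/-- Membership in `R_k := ⟨Q_m : k ≤ m⟩ ⊓ B_P`. -/
def inRk {G : Type*} [Group G] {r : ℕ} (C : Fin r → Set G)
    (π : BraidGroup r →* Equiv.Perm (Fin r)) (k : ℕ) (b : BraidGroup r) : Prop :=
  b ∈ Subgroup.closure (RkGens r k) ∧ inBP C π b

/-- A node: an orbit of `L_k × R_k × G` on `T^o(C_1, …, C_r)`, where the braid group acts
through `φ` and `G` acts by diagonal conjugation. -/
def IsNode {G : Type*} [Group G] {r : ℕ} (C : Fin r → Set G)
    (π : BraidGroup r →* Equiv.Perm (Fin r)) (φ : BraidGroup r →* Equiv.Perm (Fin r → G))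
    (k : ℕ) (N : Set (Fin r → G)) : Prop :=
  ∃ τ₀ ∈ nielsenTuples C, N = {τ | ∃ l ρ : BraidGroup r, inLk C π k l ∧ inRk C π k ρ ∧
    ∃ h : G, τ = diagConj h (φ (l * ρ) τ₀)}

/-- The head of an `r`-tuple at level `k`: `(g_1, …, g_k, (g_1 ⋯ g_k)⁻¹)`. -/
def headOf {G : Type*} [Group G] {r k : ℕ} (hk : k ≤ r) (g : Fin r → G) : Fin (k + 1) → G :=
  fun m => if h : (m : ℕ) < k then g ⟨(m : ℕ), lt_of_lt_of_le h hk⟩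
    else (((List.ofFn g).take k).prod)⁻¹

/-- The tail of an `r`-tuple at level `k`: `(g_1 ⋯ g_k, g_{k+1}, …, g_r)`. -/
def tailOf {G : Type*} [Group G] {r k : ℕ} (hk : k ≤ r) (g : Fin r → G) :
    Fin (r - k + 1) → G :=
  fun m => if _h : (m : ℕ) = 0 then ((List.ofFn g).take k).prod
    else g ⟨k + (m : ℕ) - 1, by have := m.isLt; omega⟩

section Helpers
variable {G : Type*} [Group G]

lemma braidMove_ne {r : ℕ} (i : ℕ) (g : Fin r → G) (m : Fin r)
    (h1 : (m : ℕ) ≠ i) (h2 : (m : ℕ) ≠ i + 1) : braidMove i g m = g m := by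
  simp [braidMove, h1, h2]

lemma braidMove_at_i {r : ℕ} (i : ℕ) (g : Fin r → G) (hi : i < r) (hi1 : i + 1 < r) :
    braidMove i g ⟨i, hi⟩ = g ⟨i + 1, hi1⟩ := by
  simp [braidMove, hi1]

lemma braidMove_at_i1 {r : ℕ} (i : ℕ) (g : Fin r → G) (hi1 : i + 1 < r) :
    braidMove i g ⟨i + 1, hi1⟩ =
      (g ⟨i + 1, hi1⟩)⁻¹ * g ⟨i, by omega⟩ * g ⟨i + 1, hi1⟩ := by
  simp [braidMove]

lemma prodTake_succ {r n : ℕ} (g : Fin r → G) (h : n < r) :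
    ((List.ofFn g).take (n + 1)).prod = ((List.ofFn g).take n).prod * g ⟨n, h⟩ := by
  rw [List.take_succ]
  have hlen : n < (List.ofFn g).length := by simpa using h
  rw [List.getElem?_eq_getElem hlen]
  simp

omit [Group G] in
lemma take_ofFn_congr {r n : ℕ} (f g : Fin r → G)
    (hfg : ∀ j : Fin r, (j : ℕ) < n → f j = g j) :
    (List.ofFn f).take n = (List.ofFn g).take n := by
  apply List.ext_getElem
  · simp
  · intro j h1 h2
    simp only [List.length_take, List.length_ofFn, lt_min_iff] at h1
    rw [List.getElem_take, List.getElem_take, List.getElem_ofFn, List.getElem_ofFn]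
    exact hfg ⟨j, h1.2⟩ h1.1

lemma prodTake_braidMove_lt {r k i : ℕ} (g : Fin r → G) (hik : i + 1 < k) (hkr : k ≤ r) :
    ((List.ofFn (braidMove i g)).take k).prod = ((List.ofFn g).take k).prod := by
  have h2 : i + 2 ≤ k := by omega
  clear hik
  revert hkr
  induction k, h2 using Nat.le_induction with
  | base =>
    intro hkr
    have hir : i + 1 < r := by omega
    rw [prodTake_succ _ (by omega : i + 1 < r), prodTake_succ _ (by omega : i < r),
        prodTake_succ _ (by omega : i + 1 < r), prodTake_succ _ (by omega : i < r),
        take_ofFn_congr (braidMove i g) g (fun j hj => braidMove_ne i g j (by omega) (by omega)),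
        braidMove_at_i i g (by omega) hir, braidMove_at_i1 i g hir]
    group
  | succ n hn ih =>
    intro hnr
    rw [prodTake_succ _ (by omega : n < r), prodTake_succ _ (by omega : n < r),
        ih (by omega), braidMove_ne i g ⟨n, by omega⟩ (by show n ≠ i; omega) (by show n ≠ i + 1; omega)]

lemma take_braidMove_ge {r k i : ℕ} (g : Fin r → G) (hki : k ≤ i) :
    (List.ofFn (braidMove i g)).take k = (List.ofFn g).take k :=
  take_ofFn_congr _ _ (fun j hj => braidMove_ne i g j (by omega) (by omega))

lemma prodTake_diagConj {r k : ℕ} (h : G) (g : Fin r → G) :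
    ((List.ofFn (diagConj h g)).take k).prod = h⁻¹ * ((List.ofFn g).take k).prod * h := by
  have : List.ofFn (diagConj h g) = (List.ofFn g).map (fun x => h⁻¹ * x * h) := by
    rw [List.map_ofFn]; rfl
  rw [this, ← List.map_take]
  exact List.prod_hom _ (MonoidHom.mk' (fun x => h⁻¹ * x * h) (by intro a b; group))

end Helpers

section Helpers2
variable {G : Type*} [Group G]

lemma braidMove_eq_i {r : ℕ} (i : ℕ) (g : Fin r → G) (m j : Fin r)
    (hm : (m : ℕ) = i) (hj : (j : ℕ) = i + 1) : braidMove i g m = g j := by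
  have hi1 : i + 1 < r := by have := j.isLt; omega
  simp only [braidMove]
  rw [dif_pos hm, dif_pos hi1]
  exact congrArg g (Fin.ext hj.symm)

lemma braidMove_eq_i1 {r : ℕ} (i : ℕ) (g : Fin r → G) (m a : Fin r)
    (hm : (m : ℕ) = i + 1) (ha : (a : ℕ) = i) :
    braidMove i g m = (g m)⁻¹ * g a * g m := by
  simp only [braidMove]
  rw [dif_neg (by omega), dif_pos hm]
  have : (⟨i, by have := m.isLt; omega⟩ : Fin r) = a := Fin.ext ha.symm
  rw [this]

lemma headOf_lt {r k : ℕ} (hk : k ≤ r) (g : Fin r → G) (m : Fin (k + 1)) (j : Fin r)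
    (hm : (m : ℕ) < k) (hj : (j : ℕ) = (m : ℕ)) : headOf hk g m = g j := by
  simp only [headOf]
  rw [dif_pos hm]
  exact congrArg g (Fin.ext hj.symm)

lemma headOf_last {r k : ℕ} (hk : k ≤ r) (g : Fin r → G) (m : Fin (k + 1))
    (hm : ¬ (m : ℕ) < k) : headOf hk g m = (((List.ofFn g).take k).prod)⁻¹ := by
  simp only [headOf]
  rw [dif_neg hm]

lemma tailOf_zero {r k : ℕ} (hk : k ≤ r) (g : Fin r → G) (m : Fin (r - k + 1))
    (hm : (m : ℕ) = 0) : tailOf hk g m = ((List.ofFn g).take k).prod := by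
  simp only [tailOf]
  rw [dif_pos hm]

lemma tailOf_pos {r k : ℕ} (hk : k ≤ r) (g : Fin r → G) (m : Fin (r - k + 1)) (j : Fin r)
    (hm : (m : ℕ) ≠ 0) (hj : (j : ℕ) = k + (m : ℕ) - 1) : tailOf hk g m = g j := by
  simp only [tailOf]
  rw [dif_neg hm]
  exact congrArg g (Fin.ext hj.symm)

lemma headOf_diagConj {r k : ℕ} (hk : k ≤ r) (h : G) (g : Fin r → G) :
    headOf hk (diagConj h g) = diagConj h (headOf hk g) := by
  funext m
  by_cases hm : (m : ℕ) < k
  · show _ = h⁻¹ * headOf hk g m * h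
    rw [headOf_lt hk _ m ⟨m, by omega⟩ hm rfl, headOf_lt hk g m ⟨m, by omega⟩ hm rfl]
    rfl
  · show _ = h⁻¹ * headOf hk g m * h
    rw [headOf_last hk _ m hm, headOf_last hk g m hm, prodTake_diagConj]
    group

lemma tailOf_diagConj {r k : ℕ} (hk : k ≤ r) (h : G) (g : Fin r → G) :
    tailOf hk (diagConj h g) = diagConj h (tailOf hk g) := by
  funext m
  by_cases hm : (m : ℕ) = 0
  · rw [tailOf_zero hk _ m hm]
    show _ = h⁻¹ * tailOf hk g m * h
    rw [tailOf_zero hk g m hm, prodTake_diagConj]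
  · rw [tailOf_pos hk _ m ⟨k + m - 1, by have := m.isLt; omega⟩ hm rfl]
    show _ = h⁻¹ * tailOf hk g m * h
    rw [tailOf_pos hk g m ⟨k + m - 1, by have := m.isLt; omega⟩ hm rfl]
    rfl

lemma headOf_braidMove_lt {r k i : ℕ} (hk : k ≤ r) (hik : i + 1 < k) (g : Fin r → G) :
    headOf hk (braidMove i g) = braidMove i (headOf hk g) := by
  funext m
  rcases eq_or_ne (m : ℕ) i with hmi | hmi
  · rw [headOf_lt hk _ m ⟨i, by omega⟩ (by omega) hmi.symm,
        braidMove_eq_i i g ⟨i, by omega⟩ ⟨i + 1, by omega⟩ rfl rfl,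
        braidMove_eq_i i (headOf hk g) m ⟨i + 1, by omega⟩ hmi rfl,
        headOf_lt hk g ⟨i + 1, by omega⟩ ⟨i + 1, by omega⟩ (by exact hik) rfl]
  · rcases eq_or_ne (m : ℕ) (i + 1) with hmi1 | hmi1
    · rw [headOf_lt hk _ m ⟨i + 1, by omega⟩ (by omega) hmi1.symm,
          braidMove_eq_i1 i g ⟨i + 1, by omega⟩ ⟨i, by omega⟩ rfl rfl,
          braidMove_eq_i1 i (headOf hk g) m ⟨i, by omega⟩ hmi1 rfl,
          headOf_lt hk g m ⟨i + 1, by omega⟩ (by omega) hmi1.symm,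
          headOf_lt hk g ⟨i, by omega⟩ ⟨i, by omega⟩ (by show i < k; omega) rfl]
    · rw [braidMove_ne i (headOf hk g) m hmi hmi1]
      by_cases hm : (m : ℕ) < k
      · rw [headOf_lt hk _ m ⟨m, by omega⟩ hm rfl, headOf_lt hk g m ⟨m, by omega⟩ hm rfl]
        exact braidMove_ne i g _ hmi hmi1
      · rw [headOf_last hk _ m hm, headOf_last hk g m hm,
            prodTake_braidMove_lt g hik hk]

lemma headOf_braidMove_ge {r k i : ℕ} (hk : k ≤ r) (hki : k ≤ i) (g : Fin r → G) :
    headOf hk (braidMove i g) = headOf hk g := by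
  funext m
  by_cases hm : (m : ℕ) < k
  · rw [headOf_lt hk _ m ⟨m, by omega⟩ hm rfl, headOf_lt hk g m ⟨m, by omega⟩ hm rfl]
    exact braidMove_ne i g _ (by show (m : ℕ) ≠ i; omega) (by show (m : ℕ) ≠ i + 1; omega)
  · rw [headOf_last hk _ m hm, headOf_last hk g m hm, take_braidMove_ge g hki]

lemma tailOf_braidMove_lt {r k i : ℕ} (hk : k ≤ r) (hik : i + 1 < k) (g : Fin r → G) :
    tailOf hk (braidMove i g) = tailOf hk g := by
  funext m
  by_cases hm : (m : ℕ) = 0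
  · rw [tailOf_zero hk _ m hm, tailOf_zero hk g m hm, prodTake_braidMove_lt g hik hk]
  · rw [tailOf_pos hk _ m ⟨k + m - 1, by have := m.isLt; omega⟩ hm rfl,
        tailOf_pos hk g m ⟨k + m - 1, by have := m.isLt; omega⟩ hm rfl]
    exact braidMove_ne i g _ (by show k + (m : ℕ) - 1 ≠ i; omega)
      (by show k + (m : ℕ) - 1 ≠ i + 1; omega)

lemma tailOf_braidMove_ge {r k i : ℕ} (hk : k ≤ r) (hk0 : 1 ≤ k) (hki : k ≤ i)
    (hir : i + 1 < r) (g : Fin r → G) :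
    tailOf hk (braidMove i g) = braidMove (i - k + 1) (tailOf hk g) := by
  funext m
  rcases eq_or_ne (m : ℕ) 0 with hm0 | hm0
  · rw [tailOf_zero hk _ m hm0,
        braidMove_ne (i - k + 1) (tailOf hk g) m (by omega) (by omega),
        tailOf_zero hk g m hm0, take_braidMove_ge g hki]
  · rcases eq_or_ne (m : ℕ) (i - k + 1) with hmi | hmi
    · rw [tailOf_pos hk _ m ⟨i, by omega⟩ hm0 (by show (i : ℕ) = k + (m : ℕ) - 1; omega),
          braidMove_eq_i i g ⟨i, by omega⟩ ⟨i + 1, by omega⟩ rfl rfl,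
          braidMove_eq_i (i - k + 1) (tailOf hk g) m ⟨i - k + 2, by omega⟩ hmi (by show i - k + 2 = i - k + 1 + 1; omega),
          tailOf_pos hk g ⟨i - k + 2, by omega⟩ ⟨i + 1, by omega⟩ (by show i - k + 2 ≠ 0; omega)
            (by show i + 1 = k + (i - k + 2) - 1; omega)]
    · rcases eq_or_ne (m : ℕ) (i - k + 2) with hmi1 | hmi1
      · rw [tailOf_pos hk _ m ⟨i + 1, by omega⟩ hm0 (by show (i + 1 : ℕ) = k + (m : ℕ) - 1; omega),
            braidMove_eq_i1 i g ⟨i + 1, by omega⟩ ⟨i, by omega⟩ rfl rfl,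
            braidMove_eq_i1 (i - k + 1) (tailOf hk g) m ⟨i - k + 1, by omega⟩ (by omega) rfl,
            tailOf_pos hk g m ⟨i + 1, by omega⟩ hm0 (by show (i + 1 : ℕ) = k + (m : ℕ) - 1; omega),
            tailOf_pos hk g ⟨i - k + 1, by omega⟩ ⟨i, by omega⟩ (by show i - k + 1 ≠ 0; omega)
              (by show (i : ℕ) = k + (i - k + 1) - 1; omega)]
      · rw [tailOf_pos hk _ m ⟨k + m - 1, by have := m.isLt; omega⟩ hm0 rfl,
            braidMove_ne (i - k + 1) (tailOf hk g) m (by omega) (by omega),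
            tailOf_pos hk g m ⟨k + m - 1, by have := m.isLt; omega⟩ hm0 rfl]
        exact braidMove_ne i g _ (by show k + (m : ℕ) - 1 ≠ i; omega)
          (by show k + (m : ℕ) - 1 ≠ i + 1; omega)

end Helpers2

section Closure
variable {G : Type*} [Group G]

lemma L_head_tail {r k : ℕ} (hk2 : k < r)
    (φ : BraidGroup r →* Equiv.Perm (Fin r → G))
    (hφ : ∀ (m : Fin (r - 1)) (g : Fin r → G),
      φ (PresentedGroup.of m) g = braidMove (m : ℕ) g)
    (ψL : ↥(Subgroup.closure (LkGens r k)) →* Equiv.Perm (Fin (k + 1) → G))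
    (hψL : ∀ (m : Fin (r - 1)) (hm : (m : ℕ) + 1 < k) (g : Fin (k + 1) → G),
      ψL ⟨PresentedGroup.of m, Subgroup.subset_closure ⟨m, hm, rfl⟩⟩ g = braidMove (m : ℕ) g)
    {l : BraidGroup r} (hl : l ∈ Subgroup.closure (LkGens r k)) :
    ∀ g : Fin r → G, headOf hk2.le (φ l g) = ψL ⟨l, hl⟩ (headOf hk2.le g) ∧
      tailOf hk2.le (φ l g) = tailOf hk2.le g := by
  refine Subgroup.closure_induction
    (p := fun x hx => ∀ g : Fin r → G,
      headOf hk2.le (φ x g) = ψL ⟨x, hx⟩ (headOf hk2.le g) ∧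
      tailOf hk2.le (φ x g) = tailOf hk2.le g) ?_ ?_ ?_ ?_ hl
  · rintro x ⟨m, hm, rfl⟩ g
    constructor
    · rw [hφ m g, headOf_braidMove_lt hk2.le hm g]
      exact (hψL m hm _).symm
    · rw [hφ m g]
      exact tailOf_braidMove_lt hk2.le hm g
  · intro g
    show headOf hk2.le (φ 1 g) = ψL 1 (headOf hk2.le g) ∧ _
    rw [map_one, map_one]
    exact ⟨rfl, rfl⟩
  · intro x y hx hy ihx ihy g
    have e1 : φ (x * y) g = φ x (φ y g) := by rw [map_mul]; rfl
    constructor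
    · rw [e1, (ihx (φ y g)).1, (ihy g).1]
      show _ = ψL (⟨x, hx⟩ * ⟨y, hy⟩) (headOf hk2.le g)
      rw [map_mul]
      rfl
    · rw [e1, (ihx (φ y g)).2, (ihy g).2]
  · intro x hx ih g
    have e : φ x (φ x⁻¹ g) = g := by
      have h0 : φ x * φ x⁻¹ = 1 := by rw [← map_mul, mul_inv_cancel, map_one]
      calc φ x (φ x⁻¹ g) = (φ x * φ x⁻¹) g := rfl
        _ = g := by rw [h0]; rfl
    constructor
    · have h1 := (ih (φ x⁻¹ g)).1
      rw [e] at h1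
      show _ = ψL (⟨x, hx⟩⁻¹) (headOf hk2.le g)
      rw [map_inv, h1]
      simp
    · have h2 := (ih (φ x⁻¹ g)).2
      rw [e] at h2
      exact h2.symm

lemma R_head_tail {r k : ℕ} (hk1 : 1 ≤ k) (hk2 : k < r)
    (φ : BraidGroup r →* Equiv.Perm (Fin r → G))
    (hφ : ∀ (m : Fin (r - 1)) (g : Fin r → G),
      φ (PresentedGroup.of m) g = braidMove (m : ℕ) g)
    (ψR : ↥(Subgroup.closure (RkGens r k)) →* Equiv.Perm (Fin (r - k + 1) → G))
    (hψR : ∀ (m : Fin (r - 1)) (hm : k ≤ (m : ℕ)) (g : Fin (r - k + 1) → G),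
      ψR ⟨PresentedGroup.of m, Subgroup.subset_closure ⟨m, hm, rfl⟩⟩ g =
        braidMove ((m : ℕ) - k + 1) g)
    {ρ : BraidGroup r} (hρ : ρ ∈ Subgroup.closure (RkGens r k)) :
    ∀ g : Fin r → G, tailOf hk2.le (φ ρ g) = ψR ⟨ρ, hρ⟩ (tailOf hk2.le g) ∧
      headOf hk2.le (φ ρ g) = headOf hk2.le g := by
  refine Subgroup.closure_induction
    (p := fun x hx => ∀ g : Fin r → G,
      tailOf hk2.le (φ x g) = ψR ⟨x, hx⟩ (tailOf hk2.le g) ∧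
      headOf hk2.le (φ x g) = headOf hk2.le g) ?_ ?_ ?_ ?_ hρ
  · rintro x ⟨m, hm, rfl⟩ g
    have hmr : (m : ℕ) + 1 < r := by have := m.isLt; omega
    constructor
    · rw [hφ m g, tailOf_braidMove_ge hk2.le hk1 hm hmr g]
      exact (hψR m hm _).symm
    · rw [hφ m g]
      exact headOf_braidMove_ge hk2.le hm g
  · intro g
    show tailOf hk2.le (φ 1 g) = ψR 1 (tailOf hk2.le g) ∧ _
    rw [map_one, map_one]
    exact ⟨rfl, rfl⟩
  · intro x y hx hy ihx ihy g
    have e1 : φ (x * y) g = φ x (φ y g) := by rw [map_mul]; rfl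
    constructor
    · rw [e1, (ihx (φ y g)).1, (ihy g).1]
      show _ = ψR (⟨x, hx⟩ * ⟨y, hy⟩) (tailOf hk2.le g)
      rw [map_mul]
      rfl
    · rw [e1, (ihx (φ y g)).2, (ihy g).2]
  · intro x hx ih g
    have e : φ x (φ x⁻¹ g) = g := by
      have h0 : φ x * φ x⁻¹ = 1 := by rw [← map_mul, mul_inv_cancel, map_one]
      calc φ x (φ x⁻¹ g) = (φ x * φ x⁻¹) g := rfl
        _ = g := by rw [h0]; rfl
    constructor
    · have h1 := (ih (φ x⁻¹ g)).1
      rw [e] at h1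
      show _ = ψR (⟨x, hx⟩⁻¹) (tailOf hk2.le g)
      rw [map_inv, h1]
      simp
    · have h2 := (ih (φ x⁻¹ g)).2
      rw [e] at h2
      exact h2.symm

end Closure
/-- Level-`k` setup: `G` a finite group, `C_1, …, C_r` conjugacy classes ordered so that
equal classes are consecutive, `π : B_r → S_r` the canonical surjection, `φ` the braid
action of `B_r` on `G^r`, `1 < k < r`, and `L_k = ⟨Q_m : m+1<k⟩ ⊓ B_P`,
`R_k = ⟨Q_m : k≤m⟩ ⊓ B_P`, where `L_k` acts on `(k+1)`-tuples via `ψL` (the braid moves on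
the first `k` coordinates) and `R_k` acts on `(r-k+1)`-tuples via `ψR` (the corresponding
braid moves on the last `r-k` coordinates).  Then for every node `N`, the set of heads of
the tuples of `N` is a single orbit of `L_k × G` on `G^{k+1}`, and the set of tails is a
single orbit of `R_k × G` on `G^{r-k+1}`. -/
theorem node_heads_single_orbit_tails_single_orbit
    {G : Type*} [Group G] [Fintype G] {r : ℕ} (hr : 2 ≤ r)
    (C : Fin r → Set G)
    (hC : ∀ m : Fin r, ∃ x : G, C m = {y | IsConj x y})
    (hord : ∀ i j k : Fin r, i ≤ k → k ≤ j → C i = C j → C k = C i)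
    (π : BraidGroup r →* Equiv.Perm (Fin r))
    (hπ : ∀ m : Fin (r - 1),
      π (PresentedGroup.of m) =
        Equiv.swap ⟨(m : ℕ), by have := m.isLt; omega⟩
          ⟨(m : ℕ) + 1, by have := m.isLt; omega⟩)
    (φ : BraidGroup r →* Equiv.Perm (Fin r → G))
    (hφ : ∀ (m : Fin (r - 1)) (g : Fin r → G),
      φ (PresentedGroup.of m) g = braidMove (m : ℕ) g)
    (k : ℕ) (hk1 : 1 < k) (hk2 : k < r)
    (ψL : ↥(Subgroup.closure (LkGens r k)) →* Equiv.Perm (Fin (k + 1) → G))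
    (hψL : ∀ (m : Fin (r - 1)) (hm : (m : ℕ) + 1 < k) (g : Fin (k + 1) → G),
      ψL ⟨PresentedGroup.of m, Subgroup.subset_closure ⟨m, hm, rfl⟩⟩ g = braidMove (m : ℕ) g)
    (ψR : ↥(Subgroup.closure (RkGens r k)) →* Equiv.Perm (Fin (r - k + 1) → G))
    (hψR : ∀ (m : Fin (r - 1)) (hm : k ≤ (m : ℕ)) (g : Fin (r - k + 1) → G),
      ψR ⟨PresentedGroup.of m, Subgroup.subset_closure ⟨m, hm, rfl⟩⟩ g =
        braidMove ((m : ℕ) - k + 1) g)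
    (N : Set (Fin r → G)) (hN : IsNode C π φ k N) :
    (∃ t₀ : Fin (k + 1) → G,
      {t | ∃ g ∈ N, t = headOf hk2.le g} =
        {t | ∃ (l : BraidGroup r) (hl : l ∈ Subgroup.closure (LkGens r k)),
          inBP C π l ∧ ∃ h : G, t = diagConj h (ψL ⟨l, hl⟩ t₀)}) ∧
    (∃ t₀ : Fin (r - k + 1) → G,
      {t | ∃ g ∈ N, t = tailOf hk2.le g} =
        {t | ∃ (ρ : BraidGroup r) (hρ : ρ ∈ Subgroup.closure (RkGens r k)),
          inBP C π ρ ∧ ∃ h : G, t = diagConj h (ψR ⟨ρ, hρ⟩ t₀)}) := by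

  obtain ⟨τ₀, hτ₀, hNeq⟩ := hN
  have h1BP : inBP C π (1 : BraidGroup r) := by
    intro m
    rw [map_one]
    rfl
  constructor
  · refine ⟨headOf hk2.le τ₀, ?_⟩
    ext t
    simp only [Set.mem_setOf_eq]
    constructor
    · rintro ⟨g, hg, rfl⟩
      rw [hNeq] at hg
      obtain ⟨l, ρ, ⟨hlc, hlBP⟩, ⟨hρc, hρBP⟩, h, rfl⟩ := hg
      refine ⟨l, hlc, hlBP, h, ?_⟩
      have e1 : φ (l * ρ) τ₀ = φ l (φ ρ τ₀) := by rw [map_mul]; rfl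
      rw [e1, headOf_diagConj, (L_head_tail hk2 φ hφ ψL hψL hlc (φ ρ τ₀)).1,
          (R_head_tail (by omega) hk2 φ hφ ψR hψR hρc τ₀).2]
    · rintro ⟨l, hl, hlBP, h, rfl⟩
      refine ⟨diagConj h (φ (l * 1) τ₀), ?_, ?_⟩
      · rw [hNeq]
        exact ⟨l, 1, ⟨hl, hlBP⟩, ⟨Subgroup.one_mem _, h1BP⟩, h, rfl⟩
      · rw [mul_one, headOf_diagConj, (L_head_tail hk2 φ hφ ψL hψL hl τ₀).1]
  · refine ⟨tailOf hk2.le τ₀, ?_⟩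
    ext t
    simp only [Set.mem_setOf_eq]
    constructor
    · rintro ⟨g, hg, rfl⟩
      rw [hNeq] at hg
      obtain ⟨l, ρ, ⟨hlc, hlBP⟩, ⟨hρc, hρBP⟩, h, rfl⟩ := hg
      refine ⟨ρ, hρc, hρBP, h, ?_⟩
      have e1 : φ (l * ρ) τ₀ = φ l (φ ρ τ₀) := by rw [map_mul]; rfl
      rw [e1, tailOf_diagConj, (L_head_tail hk2 φ hφ ψL hψL hlc (φ ρ τ₀)).2,
          (R_head_tail (by omega) hk2 φ hφ ψR hψR hρc τ₀).1]
    · rintro ⟨ρ, hρ, hρBP, h, rfl⟩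
      refine ⟨diagConj h (φ (1 * ρ) τ₀), ?_, ?_⟩
      · rw [hNeq]
        exact ⟨1, ρ, ⟨Subgroup.one_mem _, h1BP⟩, ⟨hρ, hρBP⟩, h, rfl⟩
      · rw [one_mul, tailOf_diagConj, (R_head_tail (by omega) hk2 φ hφ ψR hψR hρ τ₀).1]
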